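/- Let 1 < p < ∞ and r, s nonzero reals. The following are equivalent for B(r,s) on l_p: (1) B(r,s)^n / n → 0 in the strong operator topology; (2) B(r,s) is mean ergodic; (3) B(r,s) is power bounded; (4) |r| + |s| ≤ 1. -/

import Mathlib

/-!
Power boundedness gives `Tⁿ x / n → 0`, and so does mean ergodicity, because `Tⁿ x / n` is a
difference of consecutive Cesàro means up to factors tending to `1`. Conversely the `k`-th
coordinate of `Tⁿ e₀` is `C(n,k) sᵏ rⁿ⁻ᵏ`, so `(|r| + |s|)ⁿ ≤ (n + 1) ‖Tⁿ e₀‖`, which is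
incompatible with `Tⁿ e₀ / n → 0` when `|r| + |s| > 1`. Finally, if `|r| + |s| ≤ 1` then `‖T‖ ≤ 1`
and `T` is mean ergodic with limit `0`, since the range of `T - 1` is dense: for
`t = s / (1 - r)`, `|t| ≤ 1`, each `e_k` differs from the average of `tʲ e_{k+j}`, `j < N`, by an
element of that range, and the average has norm at most `N^(1/p - 1) → 0` because `p > 1`.
-/

open scoped ENNReal
open Filter Topology

section Cesaro

variable {𝕜 E : Type*} [RCLike 𝕜] [NormedAddCommGroup E] [NormedSpace 𝕜 E]

theorem tendsto_inv_natCast_smul_of_tendsto_cesaro {a : ℕ → E} {L : E}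
    (h : Tendsto (fun n : ℕ => (n : 𝕜)⁻¹ • ∑ m ∈ Finset.range n, a (m + 1)) atTop (𝓝 L)) :
    Tendsto (fun n : ℕ => (n : 𝕜)⁻¹ • a n) atTop (𝓝 0) := by
  set A := fun n : ℕ => (n : 𝕜)⁻¹ • ∑ m ∈ Finset.range n, a (m + 1)
  have hA : ∀ n : ℕ, ((n + 1 : ℕ) : 𝕜)⁻¹ • a (n + 1) = A (n + 1) - ((n : 𝕜) / (n + 1)) • A n := by
    intro n
    rcases n.eq_zero_or_pos with rfl | hn
    · simp [A]
    · have hcoef : (n : 𝕜) / (n + 1) * (n : 𝕜)⁻¹ = ((n : 𝕜) + 1)⁻¹ := by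
        field_simp [Nat.cast_ne_zero.2 hn.ne']
      simp only [A, Finset.sum_range_succ, smul_smul, smul_add, Nat.cast_add, Nat.cast_one, hcoef]
      abel
  rw [← tendsto_add_atTop_iff_nat 1]
  have := ((tendsto_add_atTop_iff_nat 1).2 h).sub ((tendsto_natCast_div_add_atTop (1 : 𝕜)).smul h)
  simpa only [hA, one_smul, sub_self] using this

theorem tendsto_inv_natCast_smul_pow_apply {T : E →L[𝕜] E} {C : ℝ} (hC : ∀ n, ‖T ^ n‖ ≤ C)
    (x : E) : Tendsto (fun n : ℕ => (n : 𝕜)⁻¹ • (T ^ n) x) atTop (𝓝 0) := by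
  refine squeeze_zero_norm (fun n => ?_) (tendsto_const_div_atTop_nhds_zero_nat (C * ‖x‖))
  rw [norm_smul, norm_inv, RCLike.norm_natCast, inv_mul_eq_div]
  gcongr
  exact (T ^ n).le_of_opNorm_le (hC n) x

theorem ContinuousLinearMap.norm_pow_le_one {T : E →L[𝕜] E} (hT : ‖T‖ ≤ 1) (n : ℕ) :
    ‖T ^ n‖ ≤ 1 := by
  rcases n with _ | n
  · exact ContinuousLinearMap.norm_id_le
  · exact (norm_pow_le' T n.succ_pos).trans (pow_le_one₀ (norm_nonneg T) hT)

theorem ContinuousLinearMap.birkhoffAverage_apply (T : E →L[𝕜] E) (n : ℕ) (x : E) :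
    birkhoffAverage 𝕜 T id n (T x) = (n : 𝕜)⁻¹ • ∑ m ∈ Finset.range n, (T ^ (m + 1)) x := by
  simp [birkhoffAverage, birkhoffSum, Function.iterate_succ_apply]

theorem ContinuousLinearMap.tendsto_birkhoffAverage_zero_of_denseRange {T : E →L[𝕜] E}
    (hT : ‖T‖ ≤ 1) (hdense : DenseRange ⇑(T - 1 : E →L[𝕜] E)) (x : E) :
    Tendsto (birkhoffAverage 𝕜 T id · x) atTop (𝓝 0) := by
  have hlip : LipschitzWith 1 T := T.lipschitz.weaken (by exact_mod_cast hT)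
  have hclosed : IsClosed {x | Tendsto (birkhoffAverage 𝕜 T id · x) atTop (𝓝 0)} :=
    isClosed_setOfPred_tendsto_birkhoffAverage 𝕜 hlip uniformContinuous_id continuous_const
  refine closure_minimal (Set.forall_mem_range.2 fun y => ?_) hclosed (hdense x)
  have hbdd : Bornology.IsBounded (Set.range (id <| T^[·] y)) :=
    isBounded_iff_forall_norm_le.2 ⟨‖y‖, Set.forall_mem_range.2 fun n => by
      simpa [iterate_map_zero] using (hlip.iterate n).dist_le_mul y 0⟩
  simpa [birkhoffAverage, birkhoffSum, Finset.sum_sub_distrib, smul_sub, iterate_map_sub]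
    using tendsto_birkhoffAverage_apply_sub_birkhoffAverage 𝕜 hbdd

theorem Submodule.mem_topologicalClosure_of_tendsto_average {M : Submodule 𝕜 E} {u : ℕ → E}
    (hu : ∀ j, u j - u (j + 1) ∈ M)
    (havg : Tendsto (fun N : ℕ => (N : 𝕜)⁻¹ • ∑ j ∈ Finset.range N, u j) atTop (𝓝 0)) :
    u 0 ∈ M.topologicalClosure := by
  have hdiff : ∀ j, u 0 - u j ∈ M := by
    intro j
    induction j with
    | zero => simp
    | succ j ih => simpa using M.add_mem ih (hu j)
  refine mem_closure_of_tendsto (by simpa using tendsto_const_nhds.sub havg)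
    ((eventually_ne_atTop 0).mono fun N hN => ?_)
  have hsplit : u 0 - (N : 𝕜)⁻¹ • ∑ j ∈ Finset.range N, u j
      = (N : 𝕜)⁻¹ • ∑ j ∈ Finset.range N, (u 0 - u j) := by
    rw [Finset.sum_sub_distrib, smul_sub, Finset.sum_const, Finset.card_range,
      ← Nat.cast_smul_eq_nsmul 𝕜, smul_smul, inv_mul_cancel₀ (Nat.cast_ne_zero.2 hN), one_smul]
  rw [hsplit]
  exact M.smul_mem _ (M.sum_mem fun j _ => hdiff j)

end Cesaro

section Lp

variable {𝕜 E : Type*} [RCLike 𝕜] [NormedAddCommGroup E] {p : ℝ≥0∞} [Fact (1 ≤ p)]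

theorem lp.norm_eq_norm_of_apply_succ (hp : 0 < p.toReal)
    {x y : lp (fun _ : ℕ => E) p} (h0 : y 0 = (0 : E)) (hsucc : ∀ n, y (n + 1) = x n) :
    ‖y‖ = ‖x‖ := by
  have h := lp.norm_rpow_eq_tsum hp y
  rw [((lp.memℓp y).summable hp).tsum_eq_zero_add] at h
  have hy0 : ‖y 0‖ ^ p.toReal = 0 := by simp [h0, hp.ne']
  rw [hy0, zero_add] at h
  simp only [hsucc, ← lp.norm_rpow_eq_tsum hp x] at h
  exact Real.rpow_left_injOn hp.ne' (norm_nonneg y) (norm_nonneg x) h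

theorem lp.tendsto_inv_natCast_smul_sum_single (hp : 1 < p.toReal) {c : ℕ → 𝕜}
    (hc : ∀ j, ‖c j‖ ≤ 1) (k : ℕ) :
    Tendsto (fun N : ℕ => (N : 𝕜)⁻¹ •
      (∑ j ∈ Finset.range N, lp.single p (k + j) (c j) : lp (fun _ : ℕ => 𝕜) p)) atTop (𝓝 0) := by
  have hp0 : 0 < p.toReal := zero_lt_one.trans hp
  have hsum : ∀ N : ℕ, ‖(∑ j ∈ Finset.range N, lp.single p (k + j) (c j) : lp (fun _ : ℕ => 𝕜) p)‖
      ≤ (N : ℝ) ^ p.toReal⁻¹ := by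
    intro N
    rw [Real.le_rpow_inv_iff_of_pos (norm_nonneg _) N.cast_nonneg hp0]
    have hshift : (∑ j ∈ Finset.range N, lp.single p (k + j) (c j) : lp (fun _ : ℕ => 𝕜) p)
        = ∑ m ∈ (Finset.range N).map (addLeftEmbedding k), lp.single p m (c (m - k)) := by
      simp [Finset.sum_map]
    rw [hshift, lp.norm_sum_single hp0, Finset.sum_map]
    calc ∑ j ∈ Finset.range N, ‖c (addLeftEmbedding k j - k)‖ ^ p.toReal
        ≤ ∑ _j ∈ Finset.range N, (1 : ℝ) :=
          Finset.sum_le_sum fun j _ => Real.rpow_le_one (norm_nonneg _) (hc _) hp0.le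
      _ = N := by simp
  have hexp : Tendsto (fun N : ℕ => (N : ℝ) ^ (-(1 - p.toReal⁻¹))) atTop (𝓝 0) :=
    (tendsto_rpow_neg_atTop (by rw [sub_pos]; exact inv_lt_one_of_one_lt₀ hp)).comp
      tendsto_natCast_atTop_atTop
  refine squeeze_zero_norm' ((eventually_ne_atTop 0).mono fun N hN => ?_) hexp
  have hN : (0 : ℝ) < N := Nat.cast_pos.2 (Nat.pos_of_ne_zero hN)
  calc ‖(N : 𝕜)⁻¹ • (∑ j ∈ Finset.range N, lp.single p (k + j) (c j) : lp (fun _ : ℕ => 𝕜) p)‖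
      ≤ (N : ℝ)⁻¹ * (N : ℝ) ^ p.toReal⁻¹ := by
        rw [norm_smul, norm_inv, RCLike.norm_natCast]
        gcongr
        exact hsum N
    _ = (N : ℝ) ^ (-(1 - p.toReal⁻¹)) := by
        rw [neg_sub, Real.rpow_sub hN, Real.rpow_one, inv_mul_eq_div]

end Lp

section GeneralizedDifference

variable {𝕜 : Type*} [RCLike 𝕜] {p : ℝ≥0∞} [Fact (1 ≤ p)]

/-- `T` is the generalized difference operator `B(r,s)` on `ℓ^p`. -/
def IsGeneralizedDifference (r s : 𝕜) (T : lp (fun _ : ℕ => 𝕜) p →L[𝕜] lp (fun _ : ℕ => 𝕜) p) :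
    Prop :=
  ∀ x, T x 0 = r * x 0 ∧ ∀ n, T x (n + 1) = s * x n + r * x (n + 1)

namespace IsGeneralizedDifference

variable {r s : 𝕜} {T : lp (fun _ : ℕ => 𝕜) p →L[𝕜] lp (fun _ : ℕ => 𝕜) p}

theorem apply_single (hT : IsGeneralizedDifference r s T) (k : ℕ) (a : 𝕜) :
    T (lp.single p k a) = lp.single p k (r * a) + lp.single p (k + 1) (s * a) := by
  ext n
  rcases n with _ | n
  · simp [(hT _).1, lp.single_apply, Pi.single_apply]
  · rw [(hT _).2 n]
    by_cases h : n = k <;> simp [h, lp.single_apply, Pi.single_apply]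

theorem norm_le (hT : IsGeneralizedDifference r s T) (hp : 0 < p.toReal) : ‖T‖ ≤ ‖r‖ + ‖s‖ := by
  refine T.opNorm_le_bound (by positivity) fun x => ?_
  have hshift : ‖T x - r • x‖ = ‖s • x‖ :=
    lp.norm_eq_norm_of_apply_succ hp
      (by simp only [lp.coeFn_sub, lp.coeFn_smul, Pi.sub_apply, Pi.smul_apply, smul_eq_mul,
        (hT x).1, sub_self])
      fun n => by
        simp only [lp.coeFn_sub, lp.coeFn_smul, Pi.sub_apply, Pi.smul_apply, smul_eq_mul,
          (hT x).2 n, add_sub_cancel_right]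
  calc ‖T x‖ = ‖r • x + (T x - r • x)‖ := by rw [add_sub_cancel]
    _ ≤ ‖r • x‖ + ‖T x - r • x‖ := norm_add_le _ _
    _ = (‖r‖ + ‖s‖) * ‖x‖ := by rw [hshift, norm_smul, norm_smul, add_mul]

theorem pow_single_zero_apply (hT : IsGeneralizedDifference r s T) (n k : ℕ) :
    (T ^ n) (lp.single p 0 1) k = n.choose k * s ^ k * r ^ (n - k) := by
  induction n generalizing k with
  | zero => rcases k with _ | k <;> simp [lp.single_apply]
  | succ n ih =>
    rw [pow_succ']
    change T ((T ^ n) (lp.single p 0 1)) k = _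
    rcases k with _ | k
    · rw [(hT _).1, ih 0]
      simp [pow_succ, mul_comm]
    · rw [(hT _).2 k, ih k, ih (k + 1)]
      rcases lt_trichotomy k n with h | rfl | h
      · obtain ⟨m, rfl⟩ := Nat.exists_eq_add_of_lt h
        simp only [Nat.choose_succ_succ, show k + m + 1 - k = m + 1 by omega,
          show k + m + 1 - (k + 1) = m by omega, show k + m + 1 + 1 - (k + 1) = m + 1 by omega]
        push_cast
        ring
      · simp [Nat.choose_succ_self, pow_succ]
        ring
      · simp [Nat.choose_eq_zero_of_lt h, Nat.choose_eq_zero_of_lt (Nat.lt_succ_of_lt h),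
          Nat.choose_eq_zero_of_lt (Nat.succ_lt_succ h)]

/-- The `k`-th coordinate of `Tⁿ e₀` is the `k`-th term of the binomial expansion of
`(‖r‖ + ‖s‖)ⁿ`, and each coordinate is bounded by the norm. -/
theorem norm_add_norm_pow_le (hT : IsGeneralizedDifference r s T) (n : ℕ) :
    (‖r‖ + ‖s‖) ^ n ≤ (n + 1) * ‖(T ^ n) (lp.single p 0 1)‖ := by
  have hp : p ≠ 0 := (zero_lt_one.trans_le (Fact.out : 1 ≤ p)).ne'
  calc (‖r‖ + ‖s‖) ^ n
      = ∑ k ∈ Finset.range (n + 1), ‖(T ^ n) (lp.single p 0 1) k‖ := by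
        rw [add_comm, add_pow]
        refine Finset.sum_congr rfl fun k _ => ?_
        rw [hT.pow_single_zero_apply, norm_mul, norm_mul, norm_pow, norm_pow, RCLike.norm_natCast]
        ring
    _ ≤ ∑ _k ∈ Finset.range (n + 1), ‖(T ^ n) (lp.single p 0 1)‖ :=
        Finset.sum_le_sum fun k _ => lp.norm_apply_le_norm hp _ k
    _ = (n + 1) * ‖(T ^ n) (lp.single p 0 1)‖ := by simp

theorem norm_add_norm_le_one_of_tendsto (hT : IsGeneralizedDifference r s T)
    (h : Tendsto (fun n : ℕ => (n : 𝕜)⁻¹ • (T ^ n) (lp.single p 0 1)) atTop (𝓝 0)) :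
    ‖r‖ + ‖s‖ ≤ 1 := by
  by_contra! hc
  have hsmall : ∀ᶠ n : ℕ in atTop, ‖(T ^ n) (lp.single p 0 1)‖ < n := by
    filter_upwards [(tendsto_norm_zero.comp h).eventually_lt_const one_pos,
      eventually_ne_atTop 0] with n hn hn0
    have hn0' : (0 : ℝ) < n := Nat.cast_pos.2 (Nat.pos_of_ne_zero hn0)
    rwa [Function.comp_apply, norm_smul, norm_inv, RCLike.norm_natCast, inv_mul_lt_iff₀ hn0',
      mul_one] at hn
  have hbig : ∀ᶠ n : ℕ in atTop, 2 * (n : ℝ) ^ 2 < (‖r‖ + ‖s‖) ^ n := by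
    filter_upwards [(tendsto_pow_const_div_const_pow_of_one_lt 2 hc).eventually_lt_const
      (by norm_num : (0 : ℝ) < 1 / 2)] with n hn
    rw [div_lt_iff₀ (by positivity)] at hn
    linarith
  obtain ⟨n, hn, hn', hn1⟩ := (hsmall.and (hbig.and (eventually_ge_atTop 1))).exists
  have hn1' : (1 : ℝ) ≤ n := by exact_mod_cast hn1
  nlinarith [hT.norm_add_norm_pow_le n]

theorem denseRange_sub_one (hT : IsGeneralizedDifference r s T) (hp : 1 < p.toReal) (hr : r ≠ 1)
    (hrs : ‖s‖ ≤ ‖1 - r‖) : DenseRange ⇑(T - 1) := by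
  set M := LinearMap.range (T - 1).toLinearMap
  have h1r : 1 - r ≠ 0 := sub_ne_zero.2 hr.symm
  set t := s / (1 - r)
  have ht : ‖t‖ ≤ 1 := by
    rw [norm_div]
    exact div_le_one_of_le₀ hrs (norm_nonneg _)
  have hsingle : ∀ k, lp.single p k (1 : 𝕜) ∈ M.topologicalClosure := by
    intro k
    -- `(T - 1) e_m = (r - 1) e_m + s e_{m+1}`, so consecutive `tʲ e_{k+j}` differ by `M`-elements
    have hu : ∀ j, lp.single p (k + j) (t ^ j) - lp.single p (k + (j + 1)) (t ^ (j + 1)) ∈ M := by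
      intro j
      refine ⟨lp.single p (k + j) (-(t ^ j / (1 - r))), ?_⟩
      have e1 : r * -(t ^ j / (1 - r)) - -(t ^ j / (1 - r)) = t ^ j := by field_simp; ring
      have e2 : s * -(t ^ j / (1 - r)) = -t ^ (j + 1) := by
        rw [pow_succ]
        simp only [t]
        ring
      change T _ - lp.single p (k + j) _ = _
      rw [hT.apply_single, add_sub_right_comm, ← lp.single_sub, e1, e2, lp.single_neg,
        ← sub_eq_add_neg, ← add_assoc]
    have hpow : ∀ j, ‖t ^ j‖ ≤ 1 := fun j =>
      (norm_pow t j).trans_le (pow_le_one₀ (norm_nonneg _) ht)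
    simpa using Submodule.mem_topologicalClosure_of_tendsto_average hu
      (lp.tendsto_inv_natCast_smul_sum_single hp hpow k)
  have hpt : p ≠ ⊤ := by
    rintro rfl
    norm_num at hp
  change Dense (M : Set (lp (fun _ : ℕ => 𝕜) p))
  rw [Submodule.dense_iff_topologicalClosure_eq_top, eq_top_iff]
  intro x _
  refine M.isClosed_topologicalClosure.mem_of_tendsto (lp.hasSum_single hpt x)
    (Eventually.of_forall fun S => M.topologicalClosure.sum_mem fun i _ => ?_)
  simpa [← lp.single_smul] using M.topologicalClosure.smul_mem (x i) (hsingle i)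

theorem tendsto_birkhoffAverage_zero (hT : IsGeneralizedDifference r s T) (hp : 1 < p.toReal)
    (hs : s ≠ 0) (hrs : ‖r‖ + ‖s‖ ≤ 1) (x : lp (fun _ : ℕ => 𝕜) p) :
    Tendsto (birkhoffAverage 𝕜 T id · x) atTop (𝓝 0) := by
  have hr : r ≠ 1 := by
    rintro rfl
    rw [norm_one, add_le_iff_nonpos_right, norm_le_zero_iff] at hrs
    exact hs hrs
  have hsr : ‖s‖ ≤ ‖1 - r‖ := by
    have := norm_sub_norm_le (1 : 𝕜) r
    rw [norm_one] at this
    linarith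
  exact T.tendsto_birkhoffAverage_zero_of_denseRange ((hT.norm_le (by linarith)).trans hrs)
    (hT.denseRange_sub_one hp hr hsr) x

end IsGeneralizedDifference

end GeneralizedDifference

theorem stmt10 (p : ℝ≥0∞) [Fact (1 ≤ p)] (hp1 : 1 < p) (hpt : p ≠ ⊤)
    (r s : ℝ) (hs : s ≠ 0)
    (T : lp (fun _ : ℕ => ℂ) p →L[ℂ] lp (fun _ : ℕ => ℂ) p)
    (hT : ∀ x : lp (fun _ : ℕ => ℂ) p,
      (T x : ∀ _ : ℕ, ℂ) 0 = (r : ℂ) * (x : ∀ _ : ℕ, ℂ) 0 ∧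
      ∀ n : ℕ, (T x : ∀ _ : ℕ, ℂ) (n + 1)
        = (s : ℂ) * (x : ∀ _ : ℕ, ℂ) n + (r : ℂ) * (x : ∀ _ : ℕ, ℂ) (n + 1)) :
    List.TFAE
      [∀ x, Tendsto (fun n : ℕ => ((n : ℂ))⁻¹ • (T ^ n) x) atTop (nhds 0),
       ∃ P : lp (fun _ : ℕ => ℂ) p →L[ℂ] lp (fun _ : ℕ => ℂ) p,
         ∀ x, Tendsto (fun n : ℕ =>
           ((n : ℂ))⁻¹ • ∑ m ∈ Finset.range n, (T ^ (m + 1)) x) atTop (nhds (P x)),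
       ∃ C : ℝ, ∀ n : ℕ, ‖T ^ n‖ ≤ C,
       |r| + |s| ≤ 1] := by
  have hB : IsGeneralizedDifference (r : ℂ) s T := hT
  have hp : 1 < p.toReal := by simpa using ENNReal.toReal_strict_mono hpt hp1
  have hnorm : ‖(r : ℂ)‖ + ‖(s : ℂ)‖ = |r| + |s| := by simp
  tfae_have 1 → 4 := fun h => hnorm ▸ hB.norm_add_norm_le_one_of_tendsto (h _)
  tfae_have 4 → 3 := fun h =>
    ⟨1, ContinuousLinearMap.norm_pow_le_one ((hB.norm_le (by linarith)).trans (hnorm ▸ h))⟩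
  tfae_have 3 → 1 := fun ⟨_, hC⟩ => tendsto_inv_natCast_smul_pow_apply hC
  tfae_have 2 → 1 := fun ⟨_, hP⟩ x =>
    tendsto_inv_natCast_smul_of_tendsto_cesaro (a := fun m => (T ^ m) x) (hP x)
  tfae_have 4 → 2 := fun h => ⟨0, fun x => by
    simpa [T.birkhoffAverage_apply] using
      hB.tendsto_birkhoffAverage_zero hp (by exact_mod_cast hs) (hnorm ▸ h) (T x)⟩
  tfae_finish
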